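/- Let q(x̄) be an n-ary query possibly involving similarity atoms but no inequality atoms, D a database, c̄ an n-tuple of constants, E and E' equivalence relations on Obj(D), and V and V' equivalence relations on Cells(D). If c̄ ∈ q(D_{E,V}) and E ∪ V ⊆ E' ∪ V', then c̄ ∈ q(D_{E',V'}). -/

import Mathlib

/- Core formalization of the LACE entity-resolution framework with optimality criteria
   (Bienvenu, Cima, Gutiérrez-Basulto 2022/2023 and the present paper). -/

namespace LACE

/-- Constants (objects, values, tuple identifiers) are modelled as natural numbers. -/
abbrev Const := ℕ
/-- Relation names. -/
abbrev RelName := ℕ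
/-- A cell is a pair (tuple identifier, position). -/
abbrev Cell := Const × ℕ

/-- A fact `R(t, c₁, …, c_k)` of a TID-annotated database. -/
structure Fact where
  rel : RelName
  tid : Const
  args : List Const
deriving DecidableEq

/-- A database is a finite set of facts. -/
abbrev Database := Finset Fact

/-- A schema: which (relation, position) pairs are object positions,
    together with the fixed similarity relation `≈` on constants. -/
structure Schema where
  isObjPos : RelName → ℕ → Bool
  sim : Const → Const → Prop

/-- `Obj(D)`: the object constants occurring in `D`. -/
def objs (S : Schema) (D : Database) : Set Const :=
  {c | ∃ f ∈ D, ∃ i, f.args[i]? = some c ∧ S.isObjPos f.rel i = true}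

/-- `Cells(D)`: the value cells of `D`. -/
def cells (S : Schema) (D : Database) : Set Cell :=
  {cl | ∃ f ∈ D, ∃ i, i < f.args.length ∧ S.isObjPos f.rel i = false ∧ cl = (f.tid, i)}

/-- The value(s) stored in a cell of `D`. -/
def cellValues (D : Database) (cl : Cell) : Set Const :=
  {c | ∃ f ∈ D, f.tid = cl.1 ∧ f.args[cl.2]? = some c}

/-- An extended fact: components are sets of constants (the tid component is a singleton). -/
structure ExtFact where
  rel : RelName
  tid : Set Const
  args : List (Set Const)

/-- `R` is an equivalence relation on the set `A` (as a set of ordered pairs ⊆ A × A). -/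
def IsEqRelOn {α : Type*} (A : Set α) (R : α → α → Prop) : Prop :=
  (∀ a b, R a b → a ∈ A ∧ b ∈ A) ∧ (∀ a ∈ A, R a a) ∧
  (∀ a b, R a b → R b a) ∧ (∀ a b c, R a b → R b c → R a c)

/-- `EqRel(B, A)`: the smallest equivalence relation on `A` containing the pairs of `B`
    (where `B` relates only elements of `A`). -/
def eqRelOn {α : Type*} (A : Set α) (B : α → α → Prop) : α → α → Prop :=
  fun a b => (a = b ∧ a ∈ A) ∨ (a ≠ b ∧ Relation.EqvGen B a b)

/-- The extended fact induced by a fact `f` of `D`, given an equivalence relation `E`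
    on objects and `V` on cells: object constants are replaced by their `E`-class, and
    values by the values of all `V`-equivalent cells. -/
def extFactOf (S : Schema) (D : Database) (E : Const → Const → Prop)
    (V : Cell → Cell → Prop) (f : Fact) : ExtFact :=
  ⟨f.rel, {f.tid},
   f.args.mapIdx (fun i c =>
     if S.isObjPos f.rel i then {c' | E c c'}
     else {c' | ∃ cl', V (f.tid, i) cl' ∧ c' ∈ cellValues D cl'})⟩

/-- The extended database `D_{E,V}`. -/
def extDB (S : Schema) (D : Database) (E : Const → Const → Prop)
    (V : Cell → Cell → Prop) : Set ExtFact :=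
  {ef | ∃ f ∈ D, ef = extFactOf S D E V f}

/-- Terms of queries: variables or constants. -/
inductive Term where
  | var (v : String)
  | const (c : Const)
deriving DecidableEq

/-- A relational atom `R(u₀, u₁, …, u_k)` (`u₀` is the tid position). -/
structure RAtom where
  rel : RelName
  tid : Term
  args : List Term

/-- A query: a conjunction of relational atoms, similarity atoms `u ≈ u'`,
    and inequality atoms `z ≠ z'`. -/
structure Query where
  ratoms : List RAtom
  sims : List (Term × Term)
  ineqs : List (Term × Term)

/-- The term at position `i` of atom `a` (position 0 is the tid). -/
def RAtom.termAt (a : RAtom) (i : ℕ) : Option Term :=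
  if i = 0 then some a.tid else a.args[i-1]?

/-- Term `t` occurs at position `i` of the `j`-th relational atom of `q`. -/
def occursAt (q : Query) (t : Term) (j i : ℕ) : Prop :=
  ∃ a, q.ratoms[j]? = some a ∧ a.termAt i = some t

/-- The function `h` determined by the functions `g_π` (Def. "queryeval", point 1). -/
def hOf (q : Query) (g : ℕ → ℕ → Set Const) : Term → Set Const
  | .const c => {c}
  | .var v => {c | ∀ j i, occursAt q (Term.var v) j i → c ∈ g j i}

/-- The terms occurring in a query. -/
def qTerms (q : Query) : Set Term :=
  {t | (∃ j i, occursAt q t j i) ∨ (∃ p ∈ q.sims, t = p.1 ∨ t = p.2) ∨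
       (∃ p ∈ q.ineqs, t = p.1 ∨ t = p.2)}

/-- Satisfaction of a Boolean query in the extended database `D_{E,V}`
    (Definition 2 of Bienvenu, Cima, Gutiérrez-Basulto 2023). -/
def Query.holds (S : Schema) (D : Database) (E : Const → Const → Prop)
    (V : Cell → Cell → Prop) (q : Query) : Prop :=
  ∃ g : ℕ → ℕ → Set Const,
    (∀ t ∈ qTerms q, (hOf q g t).Nonempty) ∧
    (∀ j a, q.ratoms[j]? = some a →
      (ExtFact.mk a.rel (g j 0) ((List.range a.args.length).map (fun i => g j (i+1)))
        ∈ extDB S D E V) ∧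
      (∀ i c, a.termAt i = some (Term.const c) → c ∈ g j i)) ∧
    (∀ p ∈ q.ineqs, hOf q g p.1 ∩ hOf q g p.2 = ∅) ∧
    (∀ p ∈ q.sims, ∃ c ∈ hOf q g p.1, ∃ c' ∈ hOf q g p.2, S.sim c c')

/-- Substitution of a constant for a variable in a term. -/
def Term.substV (t : Term) (x : String) (c : Const) : Term :=
  match t with
  | .var v => if v = x then .const c else .var v
  | .const d => .const d

/-- Substitution in a relational atom. -/
def RAtom.substV (a : RAtom) (x : String) (c : Const) : RAtom :=
  ⟨a.rel, a.tid.substV x c, a.args.map (fun t => t.substV x c)⟩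

/-- Substitution in a query. -/
def Query.substV (q : Query) (x : String) (c : Const) : Query :=
  ⟨q.ratoms.map (fun a => a.substV x c),
   q.sims.map (fun p => (p.1.substV x c, p.2.substV x c)),
   q.ineqs.map (fun p => (p.1.substV x c, p.2.substV x c))⟩

/-- Simultaneous substitution of an answer tuple for the answer variables. -/
def substAll (q : Query) (l : List (String × Const)) : Query :=
  l.foldl (fun q' p => q'.substV p.1 p.2) q

/-- A merging rule for objects: `q(x, y) → EqO(x, y)`. -/
structure ObjRule where
  body : Query
  x : String
  y : String

/-- A merging rule for values: `q(x_t, y_t) → EqV(⟨x_t, i⟩, ⟨y_t, i'⟩)`. -/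
structure ValRule where
  body : Query
  xt : String
  yt : String
  i : ℕ
  i' : ℕ

/-- An ER specification `Σ = ⟨Γ_O, Γ_V, Δ⟩` with hard and soft rules and
    denial constraints (a denial constraint `∀ ȳ. ¬φ(ȳ)` is given by its body `φ`). -/
structure ERSpec where
  hardO : List ObjRule
  softO : List ObjRule
  hardV : List ValRule
  softV : List ValRule
  dcs : List Query

/-- A (candidate) pair `⟨E, V⟩`. -/
structure State where
  E : Const → Const → Prop
  V : Cell → Cell → Prop

/-- The unordered pair `{o, o'}` of distinct objects is active w.r.t. an object rule. -/
def activeO (S : Schema) (D : Database) (s : State) (r : ObjRule) (p : Sym2 Const) : Prop :=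
  ∃ o o', p = Sym2.mk o o' ∧ o ≠ o' ∧ o ∈ objs S D ∧ o' ∈ objs S D ∧
    Query.holds S D s.E s.V ((r.body.substV r.x o).substV r.y o')

/-- The unordered pair of distinct cells is active w.r.t. a value rule. -/
def activeV (S : Schema) (D : Database) (s : State) (r : ValRule) (p : Sym2 Cell) : Prop :=
  ∃ t t', p = Sym2.mk ((t, r.i) : Cell) ((t', r.i') : Cell) ∧
    ((t, r.i) : Cell) ≠ (t', r.i') ∧ ((t, r.i) : Cell) ∈ cells S D ∧
    ((t', r.i') : Cell) ∈ cells S D ∧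
    Query.holds S D s.E s.V ((r.body.substV r.xt t).substV r.yt t')

/-- Result of merging an active object pair and closing under equivalence. -/
def addO (S : Schema) (D : Database) (s : State) (p : Sym2 Const) : State :=
  ⟨eqRelOn (objs S D) (fun a b => s.E a b ∨ Sym2.mk a b = p), s.V⟩

/-- Result of merging an active cell pair and closing under equivalence. -/
def addV (S : Schema) (D : Database) (s : State) (p : Sym2 Cell) : State :=
  ⟨s.E, eqRelOn (cells S D) (fun a b => s.V a b ∨ Sym2.mk a b = p)⟩

/-- One step: apply a merge that is active w.r.t. some (hard or soft) rule. -/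
def Step (S : Schema) (D : Database) (sp : ERSpec) (s s' : State) : Prop :=
  (∃ r ∈ sp.hardO ++ sp.softO, ∃ p, activeO S D s r p ∧ s' = addO S D s p) ∨
  (∃ r ∈ sp.hardV ++ sp.softV, ∃ p, activeV S D s r p ∧ s' = addV S D s p)

/-- The trivial (identity) pair of equivalence relations. -/
def trivState (S : Schema) (D : Database) : State :=
  ⟨eqRelOn (objs S D) (fun _ _ => False), eqRelOn (cells S D) (fun _ _ => False)⟩

/-- All hard rules are satisfied: every pair active w.r.t. a hard rule is merged. -/
def satHard (S : Schema) (D : Database) (sp : ERSpec) (s : State) : Prop :=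
  (∀ r ∈ sp.hardO, ∀ o o', activeO S D s r (Sym2.mk o o') → s.E o o') ∧
  (∀ r ∈ sp.hardV, ∀ c c', activeV S D s r (Sym2.mk c c') → s.V c c')

/-- All denial constraints are satisfied in `D_{E,V}`. -/
def satDCs (S : Schema) (D : Database) (sp : ERSpec) (s : State) : Prop :=
  ∀ q ∈ sp.dcs, ¬ Query.holds S D s.E s.V q

/-- `⟨E, V⟩ ∈ Sol(D, Σ)`: obtained from the trivial pair by iteratively applying
    active merges, satisfying all hard rules and all denial constraints. -/
def Sol (S : Schema) (D : Database) (sp : ERSpec) (s : State) : Prop :=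
  Relation.ReflTransGen (Step S D sp) (trivState S D) s ∧
  satHard S D sp s ∧ satDCs S D sp s

/-- A merge: an unordered pair of objects or of cells. -/
abbrev MPair := Sym2 Const ⊕ Sym2 Cell
/-- A rule of the specification. -/
abbrev Rule := ObjRule ⊕ ValRule

/-- `actP(D, E, V, Σ)`: the set of pairs `(p, r)` with `p` active w.r.t. rule `r`. -/
def activeP (S : Schema) (D : Database) (sp : ERSpec) (s : State) : Set (MPair × Rule) :=
  {pr | (∃ p r, pr = (Sum.inl p, Sum.inl r) ∧ r ∈ sp.hardO ++ sp.softO ∧ activeO S D s r p) ∨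
        (∃ p r, pr = (Sum.inr p, Sum.inr r) ∧ r ∈ sp.hardV ++ sp.softV ∧ activeV S D s r p)}

/-- A rule is soft. -/
def softRule (sp : ERSpec) : Rule → Prop
  | .inl r => r ∈ sp.softO
  | .inr r => r ∈ sp.softV

/-- The merge `p` has been performed in `⟨E, V⟩`. -/
def merged (s : State) : MPair → Prop
  | .inl p => ∃ o o', p = Sym2.mk o o' ∧ s.E o o'
  | .inr p => ∃ c c', p = Sym2.mk c c' ∧ s.V c c'

/-- The set `E ∪ V` of performed merges, as ordered pairs. -/
def mergeSet (s : State) : Set ((Const × Const) ⊕ (Cell × Cell)) :=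
  {x | match x with
       | .inl p => s.E p.1 p.2
       | .inr p => s.V p.1 p.2}

/-- `supp(E, V)`: the active pairs, with their supporting rules, that belong to `E ∪ V`. -/
def suppSet (S : Schema) (D : Database) (sp : ERSpec) (s : State) : Set (MPair × Rule) :=
  {pr | pr ∈ activeP S D sp s ∧ merged s pr.1}

/-- `abs(E, V)`: the active pairs that are absent from `E ∪ V`. -/
def absSet (S : Schema) (D : Database) (sp : ERSpec) (s : State) : Set MPair :=
  {p | (∃ r, (p, r) ∈ activeP S D sp s) ∧ ¬ merged s p}

/-- `viol(E, V)`: the violated soft rules, i.e. pairs `(p, σ)` with `σ` soft,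
    `p` active w.r.t. `σ` but not merged. -/
def violSet (S : Schema) (D : Database) (sp : ERSpec) (s : State) : Set (MPair × Rule) :=
  {pr | pr ∈ activeP S D sp s ∧ softRule sp pr.2 ∧ ¬ merged s pr.1}

/-- The optimality criteria. -/
inductive Crit where
  | maxES | maxSS | maxEC | maxSC | minAS | minAC | minVS | minVC

/-- `better X s' s`: solution `s'` is strictly better than `s` according to criterion `X`. -/
def better (S : Schema) (D : Database) (sp : ERSpec) : Crit → State → State → Prop
  | .maxES, s', s => mergeSet s ⊂ mergeSet s'
  | .maxSS, s', s => suppSet S D sp s ⊂ suppSet S D sp s'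
  | .maxEC, s', s => (mergeSet s).ncard < (mergeSet s').ncard
  | .maxSC, s', s => (suppSet S D sp s).ncard < (suppSet S D sp s').ncard
  | .minAS, s', s => absSet S D sp s' ⊂ absSet S D sp s
  | .minAC, s', s => (absSet S D sp s').ncard < (absSet S D sp s).ncard
  | .minVS, s', s => violSet S D sp s' ⊂ violSet S D sp s
  | .minVC, s', s => (violSet S D sp s').ncard < (violSet S D sp s).ncard

/-- `OptSol_X(D, Σ)`: the set of `X`-optimal solutions. -/
def OptSol (S : Schema) (D : Database) (sp : ERSpec) (X : Crit) : Set State :=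
  {s | Sol S D sp s ∧ ∀ s', Sol S D sp s' → ¬ better S D sp X s' s}

/-- The restricted setting: no denial constraint uses inequality atoms. -/
def noIneqDCs (sp : ERSpec) : Prop := ∀ q ∈ sp.dcs, q.ineqs = []

end LACE

/-!
Since `E ⊆ E'` and `V ⊆ V'`, the extended fact that a fact of `D` induces in `D_{E,V}` is
componentwise contained in the one it induces in `D_{E',V'}`. Matching every atom of the query
to the latter instead of the former only enlarges the sets `h(u)`. Nonemptiness, membership of
constants and similarity witnesses survive this enlargement; only inequality atoms, which demand
disjointness, could be broken by it.
-/

theorem List.map_range_getD_getElem? {α : Type*} (l : List α) (d : ℕ → α) :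
    (List.range l.length).map (fun i => l[i]?.getD (d i)) = l :=
  List.ext_getElem (by simp) fun i _ hi => by simp [List.getElem?_eq_getElem hi]

namespace LACE

section Monotonicity

variable {S : Schema} {D : Database} {E E' : Const → Const → Prop} {V V' : Cell → Cell → Prop}

theorem extFactOf_args_length (f : Fact) : (extFactOf S D E V f).args.length = f.args.length :=
  List.length_mapIdx

theorem extFactOf_args_getElem_subset (hE : E ≤ E') (hV : V ≤ V') (f : Fact) {i : ℕ}
    (hi : i < (extFactOf S D E V f).args.length) (hi' : i < (extFactOf S D E' V' f).args.length) :
    (extFactOf S D E V f).args[i] ⊆ (extFactOf S D E' V' f).args[i] := by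
  simp only [extFactOf, List.getElem_mapIdx]
  split
  · exact fun c hc => hE _ _ hc
  · exact fun c ⟨cl, hcl, hc⟩ => ⟨cl, hV _ _ hcl, hc⟩

theorem exists_le_mem_extDB (hE : E ≤ E') (hV : V ≤ V') {r : RelName} {n : ℕ}
    {γ : ℕ → Set Const}
    (h : ExtFact.mk r (γ 0) ((List.range n).map (fun i => γ (i + 1))) ∈ extDB S D E V) :
    ∃ γ' : ℕ → Set Const, γ ≤ γ' ∧
      ExtFact.mk r (γ' 0) ((List.range n).map (fun i => γ' (i + 1))) ∈ extDB S D E' V' := by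
  obtain ⟨f, hfD, hf⟩ := h
  have hr : r = f.rel := congrArg ExtFact.rel hf
  have hγ0 : γ 0 = {f.tid} := congrArg ExtFact.tid hf
  have hγL := congrArg ExtFact.args hf
  set L' := (extFactOf S D E' V' f).args
  have hn : n = L'.length := by
    simpa [L', extFactOf_args_length] using congrArg List.length hγL
  -- positions beyond the arity keep their old sets, so that `γ ≤ γ'` holds everywhere
  refine ⟨fun i => if i = 0 then γ 0 else L'[i - 1]?.getD (γ i), ?_, f, hfD, ?_⟩
  · rintro (_ | k)
    · simp
    · by_cases hk : k < n
      · have hkL' : k < L'.length := hn ▸ hk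
        have hγk : γ (k + 1) = (extFactOf S D E V f).args[k]'(by
            simpa [L', extFactOf_args_length] using hkL') := by
          rw [← List.getElem_of_eq hγL (by simpa using hk), List.getElem_map, List.getElem_range]
        simpa [List.getElem?_eq_getElem hkL', hγk] using
          extFactOf_args_getElem_subset hE hV f _ hkL'
      · simp [List.getElem?_eq_none (hn ▸ not_lt.mp hk : L'.length ≤ k)]
  · rw [show extFactOf S D E' V' f = ⟨f.rel, {f.tid}, L'⟩ from rfl, hr, hn]
    simpa [hγ0] using List.map_range_getD_getElem? L' (fun i => γ (i + 1))

theorem hOf_mono {q : Query} {g g' : ℕ → ℕ → Set Const} (hg : g ≤ g') (t : Term) :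
    hOf q g t ⊆ hOf q g' t := by
  cases t with
  | const _ => exact subset_rfl
  | var v => exact fun c hc j i hji => hg j i (hc j i hji)

theorem Query.holds_mono {q : Query} (hq : q.ineqs = []) (hE : E ≤ E') (hV : V ≤ V')
    (h : q.holds S D E V) : q.holds S D E' V' := by
  obtain ⟨g, hne, hatoms, -, hsims⟩ := h
  have hlift : ∀ j, ∃ γ' : ℕ → Set Const, g j ≤ γ' ∧ ∀ a, q.ratoms[j]? = some a →
      ExtFact.mk a.rel (γ' 0) ((List.range a.args.length).map (fun i => γ' (i + 1)))
        ∈ extDB S D E' V' := by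
    intro j
    cases ha : q.ratoms[j]? with
    | none => exact ⟨g j, le_rfl, by simp⟩
    | some a =>
      obtain ⟨γ', hle, hmem⟩ := exists_le_mem_extDB hE hV (hatoms j a ha).1
      exact ⟨γ', hle, fun a' ha' => by cases ha'; exact hmem⟩
  choose g' hgg' hg'atoms using hlift
  refine ⟨g', fun t ht => (hne t ht).mono (hOf_mono hgg' t), fun j a ha => ?_, by simp [hq], ?_⟩
  · exact ⟨hg'atoms j a ha, fun i c hc => hgg' j i ((hatoms j a ha).2 i c hc)⟩
  · intro p hp
    obtain ⟨c, hc, c', hc', hsim⟩ := hsims p hp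
    exact ⟨c, hOf_mono hgg' _ hc, c', hOf_mono hgg' _ hc', hsim⟩

end Monotonicity

theorem substAll_ineqs_eq_nil {q : Query} (hq : q.ineqs = []) (l : List (String × Const)) :
    (substAll q l).ineqs = [] := by
  induction l generalizing q with
  | nil => exact hq
  | cons p l ih => exact ih (by simp [Query.substV, hq])

theorem query_monotone_general (S : Schema) (D : Database) (q : Query) (hq : q.ineqs = [])
    (xs : List String) (cs : List Const)
    (E E' : Const → Const → Prop) (V V' : Cell → Cell → Prop)
    (hsub : mergeSet ⟨E, V⟩ ⊆ mergeSet ⟨E', V'⟩)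
    (h : Query.holds S D E V (substAll q (xs.zip cs))) :
    Query.holds S D E' V' (substAll q (xs.zip cs)) := by
  have hE : E ≤ E' := fun a b hab => hsub (a := .inl (a, b)) hab
  have hV : V ≤ V' := fun a b hab => hsub (a := .inr (a, b)) hab
  exact Query.holds_mono (substAll_ineqs_eq_nil hq _) hE hV h

/-- Lemma "monotone": let `q(x̄)` be an `n`-ary query possibly with
similarity atoms but with no inequality atoms, `D` a database, `c̄` an `n`-tuple of
constants, `E, E'` equivalence relations on `Obj(D)` and `V, V'` equivalence relations
on `Cells(D)`. If `c̄ ∈ q(D_{E,V})` and `E ∪ V ⊆ E' ∪ V'`, then `c̄ ∈ q(D_{E',V'})`. -/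
theorem query_monotone (S : Schema) (D : Database) (q : Query) (hq : q.ineqs = [])
    (xs : List String) (cs : List Const) (hlen : xs.length = cs.length)
    (E E' : Const → Const → Prop) (V V' : Cell → Cell → Prop)
    (hE : IsEqRelOn (objs S D) E) (hE' : IsEqRelOn (objs S D) E')
    (hV : IsEqRelOn (cells S D) V) (hV' : IsEqRelOn (cells S D) V')
    (hsub : mergeSet ⟨E, V⟩ ⊆ mergeSet ⟨E', V'⟩)
    (h : Query.holds S D E V (substAll q (xs.zip cs))) :
    Query.holds S D E' V' (substAll q (xs.zip cs)) :=
  query_monotone_general S D q hq xs cs E E' V V' hsub h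

end LACE
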